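/- Fix n ≥ 1, k ∈ ℂ, ε ∈ {1,−1}, and complex numbers a₁,…,aₙ, u₁,…,u_{n−1}, v₂,…,vₙ. Define n×n matrices (L̂₁₁)_{mp} = δ_{mp}·a_m, (L̂₂₂)_{mp} = ε·δ_{mp}·(−1)^{m−1}·a_m, (L̂₁₂)_{mp} = δ_{p,m+1}·u_m + δ_{p,m−1}·v_m, (L̂₂₁)_{mp} = ε·(δ_{p,m+1}·(−1)^{m+1}·u_m + δ_{p,m−1}·(−1)^{m−1}·v_m), and for z ∈ ℂ set L(z) := (1+kz)·[[L̂₁₁, L̂₁₂],[L̂₂₁, L̂₂₂]] as an operator on ℂ² ⊗ ℂⁿ (2×2 block matrix with n×n blocks). Then for all z, z' ∈ ℂ with z·z' ≠ 1, putting z'' = (z − z')/(1 − z·z'), the exchange relation R̂(z'')₁₂ · L(z)₂ · L(z')₁ = L(z')₂ · L(z)₁ · R̂(z'')₁₂ holds as operators on ℂ² ⊗ ℂ² ⊗ ℂⁿ. -/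

import Mathlib

noncomputable section

open Matrix Complex

/-- 4×4 complex matrix reindexed by pairs in `Fin 2 × Fin 2` (lexicographic order). -/
def pairMat (A : Matrix (Fin 4) (Fin 4) ℂ) :
    Matrix (Fin 2 × Fin 2) (Fin 2 × Fin 2) ℂ :=
  Matrix.of fun p q =>
    A ⟨2 * p.1.val + p.2.val, by omega⟩ ⟨2 * q.1.val + q.2.val, by omega⟩

/-- The alternative parametrisation of the Baxterised braid matrix of S03
(scalar factor 1/√(1+z²) omitted). -/
def RhatZ (z : ℂ) : Matrix (Fin 2 × Fin 2) (Fin 2 × Fin 2) ℂ :=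
  pairMat !![1, 0, 0, z;  0, 1, -z, 0;  0, z, 1, 0;  -z, 0, 0, 1]

/-- The block `L̂₁₁`: the diagonal matrix with entries `a_m`. -/
def Lh11 (n : ℕ) (a : Fin n → ℂ) : Matrix (Fin n) (Fin n) ℂ :=
  Matrix.of fun m p => if m = p then a m else 0

/-- The block `L̂₂₂`: `ε·δ_{mp}·(−1)^{m−1}·a_m` (indices 1-based in the paper,
so the sign is `(−1)^(m.val)` for zero-based `m`). -/
def Lh22 (n : ℕ) (ε : ℂ) (a : Fin n → ℂ) : Matrix (Fin n) (Fin n) ℂ :=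
  Matrix.of fun m p => if m = p then ε * (-1 : ℂ) ^ (m : ℕ) * a m else 0

/-- The block `L̂₁₂`: `δ_{p,m+1}·u_m + δ_{p,m−1}·v_m`. -/
def Lh12 (n : ℕ) (u v : Fin n → ℂ) : Matrix (Fin n) (Fin n) ℂ :=
  Matrix.of fun m p =>
    (if (p : ℕ) = (m : ℕ) + 1 then u m else 0) +
    (if (p : ℕ) + 1 = (m : ℕ) then v m else 0)

/-- The block `L̂₂₁`: `ε·(δ_{p,m+1}·(−1)^{m+1}·u_m + δ_{p,m−1}·(−1)^{m−1}·v_m)`;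
both signs equal `(−1)^(m.val)` for zero-based `m`. -/
def Lh21 (n : ℕ) (ε : ℂ) (u v : Fin n → ℂ) : Matrix (Fin n) (Fin n) ℂ :=
  Matrix.of fun m p =>
    ε * ((if (p : ℕ) = (m : ℕ) + 1 then (-1 : ℂ) ^ (m : ℕ) * u m else 0) +
         (if (p : ℕ) + 1 = (m : ℕ) then (-1 : ℂ) ^ (m : ℕ) * v m else 0))

/-- `L(z) = (1+kz)·[[L̂₁₁, L̂₁₂],[L̂₂₁, L̂₂₂]]` as an operator on ℂ² ⊗ ℂⁿ. -/
def Lz (n : ℕ) (k ε : ℂ) (a u v : Fin n → ℂ) (z : ℂ) :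
    Matrix (Fin 2 × Fin n) (Fin 2 × Fin n) ℂ :=
  (1 + k * z) • Matrix.of fun p q =>
    (!![Lh11 n a, Lh12 n u v; Lh21 n ε u v, Lh22 n ε a] p.1 q.1) p.2 q.2

/-- `L₁`: an operator on ℂ² ⊗ ℂⁿ acting on the first auxiliary factor and the
quantum space of ℂ² ⊗ ℂ² ⊗ ℂⁿ. -/
def q1 {n : ℕ} (L : Matrix (Fin 2 × Fin n) (Fin 2 × Fin n) ℂ) :
    Matrix (Fin 2 × Fin 2 × Fin n) (Fin 2 × Fin 2 × Fin n) ℂ :=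
  Matrix.of fun p q => if p.2.1 = q.2.1 then L (p.1, p.2.2) (q.1, q.2.2) else 0

/-- `L₂`: an operator on ℂ² ⊗ ℂⁿ acting on the second auxiliary factor and the
quantum space of ℂ² ⊗ ℂ² ⊗ ℂⁿ. -/
def q2 {n : ℕ} (L : Matrix (Fin 2 × Fin n) (Fin 2 × Fin n) ℂ) :
    Matrix (Fin 2 × Fin 2 × Fin n) (Fin 2 × Fin 2 × Fin n) ℂ :=
  Matrix.of fun p q => if p.1 = q.1 then L (p.2.1, p.2.2) (q.2.1, q.2.2) else 0

/-- `R̂(z'')₁₂`: the braid matrix acting on the two auxiliary factors. -/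
def r12 {n : ℕ} (A : Matrix (Fin 2 × Fin 2) (Fin 2 × Fin 2) ℂ) :
    Matrix (Fin 2 × Fin 2 × Fin n) (Fin 2 × Fin 2 × Fin n) ℂ :=
  Matrix.of fun p q => if p.2.2 = q.2.2 then A (p.1, p.2.1) (q.1, q.2.1) else 0


/-! ### Auxiliary machinery -/

section Aux

variable {n : ℕ}

/-- Diagonal sign matrix `diag((-1)^m)`. -/
def Dmat (n : ℕ) : Matrix (Fin n) (Fin n) ℂ := Matrix.diagonal fun m => (-1:ℂ)^(m:ℕ)

lemma hDA (a : Fin n → ℂ) : Dmat n * Lh11 n a = Lh11 n a * Dmat n := by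
  ext m p
  rw [Dmat, diagonal_mul, mul_diagonal]
  simp only [Lh11, of_apply]
  split_ifs with h
  · subst h; ring
  · ring

lemma hDB (u v : Fin n → ℂ) : Dmat n * Lh12 n u v = -(Lh12 n u v * Dmat n) := by
  ext m p
  rw [Dmat, diagonal_mul, Matrix.neg_apply, mul_diagonal]
  simp only [Lh12, of_apply, mul_add, add_mul, neg_add]
  congr 1
  · split_ifs with h
    · rw [show (p:ℕ) = (m:ℕ)+1 from h, pow_succ]; ring
    · ring
  · split_ifs with h
    · rw [show (m:ℕ) = (p:ℕ)+1 from h.symm, pow_succ]; ring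
    · ring

lemma hDD : Dmat n * Dmat n = 1 := by
  rw [Dmat, diagonal_mul_diagonal]
  have : (fun m : Fin n => (-1:ℂ)^(m:ℕ) * (-1)^(m:ℕ)) = fun _ => 1 := by
    funext m; rw [← pow_add, ← two_mul, pow_mul]; norm_num
  rw [this]; exact diagonal_one

lemma hC (ε : ℂ) (u v : Fin n → ℂ) : Lh21 n ε u v = ε • (Dmat n * Lh12 n u v) := by
  ext m p
  rw [Matrix.smul_apply, Dmat, diagonal_mul]
  simp only [Lh21, Lh12, of_apply, smul_eq_mul, mul_add, mul_ite, mul_zero]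

lemma hD2 (ε : ℂ) (a : Fin n → ℂ) : Lh22 n ε a = ε • (Dmat n * Lh11 n a) := by
  ext m p
  rw [Matrix.smul_apply, Dmat, diagonal_mul]
  simp only [Lh22, Lh11, of_apply, smul_eq_mul, mul_ite, mul_zero]
  split_ifs with h <;> ring

lemma octet (ε : ℂ) (hε : ε * ε = 1) (A B Dm : Matrix (Fin n) (Fin n) ℂ)
    (hda : Dm * A = A * Dm) (hdb : Dm * B = -(B * Dm)) (hdd : Dm * Dm = 1) :
    (ε • (Dm * A)) * (ε • (Dm * A)) = A * A ∧
    (ε • (Dm * A)) * (ε • (Dm * B)) = A * B ∧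
    (ε • (Dm * A)) * B = A * (ε • (Dm * B)) ∧
    (ε • (Dm * A)) * A = A * (ε • (Dm * A)) ∧
    (ε • (Dm * B)) * (ε • (Dm * A)) = -(B * A) ∧
    (ε • (Dm * B)) * (ε • (Dm * B)) = -(B * B) ∧
    (ε • (Dm * B)) * B = -(B * (ε • (Dm * B))) ∧
    (ε • (Dm * B)) * A = -(B * (ε • (Dm * A))) := by
  have eA : A * Dm = Dm * A := hda.symm
  have eB : B * Dm = -(Dm * B) := by rw [hdb, neg_neg]
  have sA : ∀ X, A * (Dm * X) = Dm * (A * X) := fun X => by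
    rw [← mul_assoc, ← hda, mul_assoc]
  have sB : ∀ X, B * (Dm * X) = -(Dm * (B * X)) := fun X => by
    rw [← mul_assoc, eB, neg_mul, mul_assoc]
  have cc : ∀ X, Dm * (Dm * X) = X := fun X => by rw [← mul_assoc, hdd, one_mul]
  refine ⟨?_, ?_, ?_, ?_, ?_, ?_, ?_, ?_⟩ <;>
    simp only [smul_mul_assoc, mul_smul_comm, smul_smul, hε, one_smul, mul_assoc,
      sA, sB, cc, hdd, eA, eB, mul_neg, neg_mul, neg_neg, mul_one, one_mul, smul_neg]

/-- The `z`-independent matrix part of `Lz`. -/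
def mk2 (A B C D : Matrix (Fin n) (Fin n) ℂ) : Matrix (Fin 2 × Fin n) (Fin 2 × Fin n) ℂ :=
  Matrix.of fun p q => (!![A, B; C, D] p.1 q.1) p.2 q.2

def bk (A B C D : Matrix (Fin n) (Fin n) ℂ) (i j : Fin 2) : Matrix (Fin n) (Fin n) ℂ :=
  !![A, B; C, D] i j

lemma q2q1_apply (A B C D : Matrix (Fin n) (Fin n) ℂ) (α β γ δ : Fin 2) (m p : Fin n) :
    (q2 (mk2 A B C D) * q1 (mk2 A B C D)) (α, β, m) (γ, δ, p)
      = (bk A B C D β δ * bk A B C D α γ) m p := by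
  rw [Matrix.mul_apply, Matrix.mul_apply]
  simp only [q1, q2, mk2, bk, of_apply, Fintype.sum_prod_type, ite_mul, mul_ite,
    zero_mul, mul_zero, Finset.sum_ite_eq, Finset.sum_ite_eq', Finset.mem_univ, if_true,
    Finset.sum_ite_irrel, Finset.sum_const_zero]

section Rent
variable (w : ℂ)
lemma R00 : RhatZ w (0,0) (0,0) = 1 := rfl
lemma R01 : RhatZ w (0,0) (0,1) = 0 := rfl
lemma R02 : RhatZ w (0,0) (1,0) = 0 := rfl
lemma R03 : RhatZ w (0,0) (1,1) = w := rfl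
lemma R10 : RhatZ w (0,1) (0,0) = 0 := rfl
lemma R11 : RhatZ w (0,1) (0,1) = 1 := rfl
lemma R12 : RhatZ w (0,1) (1,0) = -w := rfl
lemma R13 : RhatZ w (0,1) (1,1) = 0 := rfl
lemma R20 : RhatZ w (1,0) (0,0) = 0 := rfl
lemma R21 : RhatZ w (1,0) (0,1) = w := rfl
lemma R22 : RhatZ w (1,0) (1,0) = 1 := rfl
lemma R23 : RhatZ w (1,0) (1,1) = 0 := rfl
lemma R30 : RhatZ w (1,1) (0,0) = -w := rfl
lemma R31 : RhatZ w (1,1) (0,1) = 0 := rfl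
lemma R32 : RhatZ w (1,1) (1,0) = 0 := rfl
lemma R33 : RhatZ w (1,1) (1,1) = 1 := rfl
end Rent

lemma bk00 (A B C D : Matrix (Fin n) (Fin n) ℂ) : bk A B C D 0 0 = A := rfl
lemma bk01 (A B C D : Matrix (Fin n) (Fin n) ℂ) : bk A B C D 0 1 = B := rfl
lemma bk10 (A B C D : Matrix (Fin n) (Fin n) ℂ) : bk A B C D 1 0 = C := rfl
lemma bk11 (A B C D : Matrix (Fin n) (Fin n) ℂ) : bk A B C D 1 1 = D := rfl

lemma comm_key (A B C D : Matrix (Fin n) (Fin n) ℂ)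
    (h1 : D*D = A*A) (h2 : D*C = A*B) (h3 : D*B = A*C) (h4 : D*A = A*D)
    (h5 : C*D = -(B*A)) (h6 : C*C = -(B*B)) (h7 : C*B = -(B*C)) (h8 : C*A = -(B*D))
    (w : ℂ) :
    r12 (RhatZ w) * (q2 (mk2 A B C D) * q1 (mk2 A B C D))
      = (q2 (mk2 A B C D) * q1 (mk2 A B C D)) * r12 (RhatZ w) := by
  ext ⟨α, β, m⟩ ⟨γ, δ, p⟩
  rw [Matrix.mul_apply, Matrix.mul_apply]
  simp only [r12, of_apply, Fintype.sum_prod_type, ite_mul, mul_ite, zero_mul, mul_zero,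
    Finset.sum_ite_eq, Finset.sum_ite_eq', Finset.mem_univ, if_true,
    Finset.sum_ite_irrel, Finset.sum_const_zero, Fin.sum_univ_two, q2q1_apply]
  fin_cases α <;> fin_cases β <;> fin_cases γ <;> fin_cases δ <;>
    simp only [Fin.mk_zero, Fin.mk_one, R00, R01, R02, R03, R10, R11, R12, R13,
      R20, R21, R22, R23, R30, R31, R32, R33,
      bk00, bk01, bk10, bk11, h1, h2, h3, h4, h5, h6, h7, h8, Matrix.neg_apply] <;>
    ring

lemma q1_smul (c : ℂ) (L : Matrix (Fin 2 × Fin n) (Fin 2 × Fin n) ℂ) :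
    q1 (c • L) = c • q1 L := by
  ext p q
  simp [q1, Matrix.smul_apply, smul_eq_mul, mul_ite, mul_zero]

lemma q2_smul (c : ℂ) (L : Matrix (Fin 2 × Fin n) (Fin 2 × Fin n) ℂ) :
    q2 (c • L) = c • q2 L := by
  ext p q
  simp [q2, Matrix.smul_apply, smul_eq_mul, mul_ite, mul_zero]

end Aux

/-- The `n×n`-block representation `L(z)` satisfies the exchange relation
`R̂(z'')₁₂ · L(z)₂ · L(z')₁ = L(z')₂ · L(z)₁ · R̂(z'')₁₂` with
`z'' = (z − z')/(1 − z·z')`. -/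
theorem block_representation_exchange
    (n : ℕ) (hn : 1 ≤ n) (k ε : ℂ) (hε : ε = 1 ∨ ε = -1)
    (a u v : Fin n → ℂ) (z z' : ℂ) (h : z * z' ≠ 1) :
    r12 (RhatZ ((z - z') / (1 - z * z'))) * q2 (Lz n k ε a u v z) * q1 (Lz n k ε a u v z') =
      q2 (Lz n k ε a u v z') * q1 (Lz n k ε a u v z) *
        r12 (RhatZ ((z - z') / (1 - z * z'))) := by
  have hε2 : ε * ε = 1 := by rcases hε with h1 | h1 <;> simp [h1]
  obtain ⟨o1, o2, o3, o4, o5, o6, o7, o8⟩ :=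
    octet ε hε2 (Lh11 n a) (Lh12 n u v) (Dmat n) (hDA a) (hDB u v) hDD
  rw [← hD2 ε a] at o1 o2 o3 o4 o5 o8
  rw [← hC ε u v] at o2 o3 o5 o6 o7 o8
  have key := comm_key (Lh11 n a) (Lh12 n u v) (Lh21 n ε u v) (Lh22 n ε a)
    o1 o2 o3 o4 o5 o6 o7 o8 ((z - z') / (1 - z * z'))
  have e : ∀ zz : ℂ, Lz n k ε a u v zz
      = (1 + k * zz) • mk2 (Lh11 n a) (Lh12 n u v) (Lh21 n ε u v) (Lh22 n ε a) :=
    fun zz => rfl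
  rw [e z, e z', q1_smul, q2_smul, q1_smul, q2_smul]
  simp only [mul_smul_comm, smul_mul_assoc, smul_smul]
  rw [mul_assoc, key, mul_comm (1 + k * z)]
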